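/- There exists a₀ > 0 such that for every a with 0 < a < a₀ and every integer m ≥ 1 satisfying (s₁ + 2rs₁a)^m = 1/(4r²s₂²a²), one has φ((1−2ra)/(1+2ra)) > 1, where φ(λ) = λ^m · s₁^(m−1) · s₂ · (1+2ra)^m · (λ(1+2ra) − 1) · (s₂(2λ−1)(λ s₁(1+2ra) − 1) − s₁). -/

import Mathlib

/-!
With `t = 2ra` and `λ = (1 - t)/(1 + t)`, the relation `s₁ s₂ = s₁ + s₂` collapses `φ(λ)` to
`λ^m · s₁^m (1+t)^m s₂² t² · (1 + 4/s₂ - 3t)/(1 + t)`, and the middle factor is exactly the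
product that the constraint on `m` sets equal to `1`. The last factor tends to `1 + 4/s₂ > 1`
as `t → 0`. The constraint also gives `s₁^m t² ≤ 1`, i.e. `m ≤ -2 log t / log s₁`, so
Bernoulli's inequality yields `λ^m ≥ 1 - 2mt ≥ 1 + 4 t log t / log s₁`, which tends to `1`.
-/

open Real Filter Topology

noncomputable def phi (s₁ s₂ r a : ℝ) (m : ℕ) (l : ℝ) : ℝ :=
  l ^ m * s₁ ^ (m - 1) * s₂ * (1 + 2 * r * a) ^ m * (l * (1 + 2 * r * a) - 1) *
    (s₂ * (2 * l - 1) * (l * s₁ * (1 + 2 * r * a) - 1) - s₁)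

theorem phi_one_sub_div_one_add_eq {s₁ s₂ r a : ℝ} {m : ℕ} (hs : s₁ * s₂ = s₁ + s₂)
    (hs₂ : s₂ ≠ 0) (hm : 1 ≤ m) (ht : 1 + 2 * r * a ≠ 0) :
    phi s₁ s₂ r a m ((1 - 2 * r * a) / (1 + 2 * r * a)) =
      ((1 - 2 * r * a) / (1 + 2 * r * a)) ^ m *
        ((s₁ + 2 * r * s₁ * a) ^ m * (4 * r ^ 2 * s₂ ^ 2 * a ^ 2)) *
        ((1 + 4 / s₂ - 3 * (2 * r * a)) / (1 + 2 * r * a)) := by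
  obtain ⟨k, rfl⟩ := Nat.exists_eq_add_of_le' hm
  have h₁ : s₁ + 2 * r * s₁ * a = s₁ * (1 + 2 * r * a) := by ring
  have h₂ : 4 * r ^ 2 * s₂ ^ 2 * a ^ 2 = (s₂ * (2 * r * a)) ^ 2 := by ring
  rw [phi, Nat.add_sub_cancel, h₁, h₂, mul_pow]
  generalize 2 * r * a = t at *
  generalize hl : (1 - t) / (1 + t) = l
  have hl₁ : l * (1 + t) - 1 = -t := by rw [← hl]; field_simp; ring
  have hl₂ : s₂ * (2 * l - 1) * (l * s₁ * (1 + t) - 1) - s₁ =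
      -(s₁ * t * (s₂ + 4 - 3 * t * s₂)) / (1 + t) := by
    rw [← hl]; field_simp; linear_combination (1 - 3 * t) * hs
  rw [hl₁, hl₂]
  field_simp
  ring

theorem natCast_mul_log_add_two_mul_log_nonpos {s t : ℝ} {m : ℕ} (hs : 0 < s) (ht : 0 < t)
    (h : s ^ m * t ^ 2 ≤ 1) : m * log s + 2 * log t ≤ 0 := by
  have := log_nonpos (by positivity) h
  rwa [log_mul (by positivity) (by positivity), log_pow, log_pow, Nat.cast_ofNat] at this

theorem one_sub_two_mul_le_ratio_pow {t : ℝ} (ht₀ : 0 ≤ t) (ht : t ≤ 1 / 2) (m : ℕ) :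
    1 - 2 * m * t ≤ ((1 - t) / (1 + t)) ^ m := by
  have hle : 1 - 2 * t ≤ (1 - t) / (1 + t) := by
    rw [le_div_iff₀ (by linarith)]
    nlinarith
  calc 1 - 2 * m * t = 1 + m * (-2 * t) := by ring
    _ ≤ (1 + -2 * t) ^ m := one_add_mul_le_pow (by linarith) m
    _ ≤ ((1 - t) / (1 + t)) ^ m := pow_le_pow_left₀ (by linarith) (by linarith) m

theorem one_add_mul_mul_log_le_ratio_pow {s t : ℝ} {m : ℕ} (hs : 1 < s) (ht₀ : 0 < t)
    (ht : t ≤ 1 / 2) (h : s ^ m * t ^ 2 ≤ 1) :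
    1 + 4 / log s * (t * log t) ≤ ((1 - t) / (1 + t)) ^ m := by
  have hlog := log_pos hs
  have hm := natCast_mul_log_add_two_mul_log_nonpos (by linarith) ht₀ h
  have : 2 * m * t ≤ -(4 / log s * (t * log t)) := by
    rw [div_mul_eq_mul_div, ← neg_div, le_div_iff₀ hlog]
    nlinarith
  linarith [one_sub_two_mul_le_ratio_pow ht₀.le ht m]

theorem eventually_one_lt_one_add_mul_mul_log_mul {c : ℝ} (hc : 0 < c) (κ : ℝ) :
    ∀ᶠ t in 𝓝 0, 1 < (1 + κ * (t * log t)) * ((1 + c - 3 * t) / (1 + t)) := by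
  have hcont : ContinuousAt (fun t ↦ (1 + κ * (t * log t)) * ((1 + c - 3 * t) / (1 + t))) 0 := by
    have := continuous_mul_log.continuousAt (x := 0)
    fun_prop (disch := norm_num)
  exact continuousAt_const.eventually_lt hcont (by simpa using hc)

theorem stmt_12 (s₁ s₂ r : ℝ) (hs₁ : 1 < s₁) (hs₂ : 1 < s₂)
    (hsum : 1 / s₁ + 1 / s₂ = 1) (hr : 0 < r) :
    ∃ a₀ > 0, ∀ a : ℝ, 0 < a → a < a₀ → ∀ m : ℕ, 1 ≤ m →
      (s₁ + 2 * r * s₁ * a) ^ m = 1 / (4 * r ^ 2 * s₂ ^ 2 * a ^ 2) →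
      1 < phi s₁ s₂ r a m ((1 - 2 * r * a) / (1 + 2 * r * a)) := by
  have hs : s₁ * s₂ = s₁ + s₂ := by field_simp at hsum; linarith
  obtain ⟨ε, hε, hε_lt⟩ := Metric.eventually_nhds_iff.1
    (eventually_one_lt_one_add_mul_mul_log_mul (c := 4 / s₂) (by positivity) (4 / log s₁))
  refine ⟨min ε (1 / 3) / (2 * r), by positivity, fun a ha haε m hm hconstr => ?_⟩
  have ht : 0 < 2 * r * a := by positivity
  obtain ⟨htε, ht_third⟩ : 2 * r * a < ε ∧ 2 * r * a < 1 / 3 :=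
    lt_min_iff.1 (by rwa [lt_div_iff₀' (by positivity)] at haε)
  have hprod : (s₁ + 2 * r * s₁ * a) ^ m * (4 * r ^ 2 * s₂ ^ 2 * a ^ 2) = 1 := by
    rw [hconstr, one_div, inv_mul_cancel₀ (by positivity)]
  have hbound : s₁ ^ m * (2 * r * a) ^ 2 ≤ 1 := by
    calc s₁ ^ m * (2 * r * a) ^ 2 ≤ (s₁ * (1 + 2 * r * a)) ^ m * (s₂ * (2 * r * a)) ^ 2 := by
          gcongr ?_ ^ m * ?_ ^ 2
          · exact le_mul_of_one_le_right (by linarith) (by linarith)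
          · exact le_mul_of_one_le_left ht.le hs₂.le
      _ = (s₁ + 2 * r * s₁ * a) ^ m * (4 * r ^ 2 * s₂ ^ 2 * a ^ 2) := by ring
      _ = 1 := hprod
  rw [phi_one_sub_div_one_add_eq hs (by positivity) hm (by linarith), hprod, mul_one]
  calc 1 < (1 + 4 / log s₁ * (2 * r * a * log (2 * r * a))) *
        ((1 + 4 / s₂ - 3 * (2 * r * a)) / (1 + 2 * r * a)) :=
        hε_lt (by rw [dist_zero_right, Real.norm_of_nonneg ht.le]; exact htε)
    _ ≤ _ := by
        gcongr ?_ * _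
        · have hs₂_inv : 0 < 4 / s₂ := by positivity
          exact div_nonneg (by linarith) (by linarith)
        · exact one_add_mul_mul_log_le_ratio_pow hs₁ ht (by linarith) hbound
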